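/- For a lossless variable-length binary code without prefix constraints, the expected codeword length satisfies E[ℓ(C(A))] ≥ θ⁻¹(H(A)), where θ(x) = x + (1+x)·log₂(1+x) − x·log₂(x). -/

import Mathlib

/-!
For `0 < s < 1` the weights `g x = (1 - s) (s/2)^ℓ(C x)` have total mass at most `1`: an
injective binary code has at most `2^k` codewords of length `k`, so the mass is at most
`(1 - s) ∑ₖ sᵏ = 1`. Gibbs' inequality `H(A) ≤ E[log₂ (1 / g A)]` then gives
`H(A) ≤ log₂ (1 - s)⁻¹ + L log₂ (2 / s)` with `L = E[ℓ(C A)]`, and the choice `s = L / (1 + L)`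
turns the right-hand side into `θ(L)`. Since `θ` increases strictly on `[0, ∞)`, `L ≥ θ⁻¹(H(A))`.
-/

open scoped Classical
open Finset

noncomputable def prob {Ω : Type} [Fintype Ω] (p : Ω → ℝ) (E : Ω → Prop) : ℝ :=
  ∑ ω, if E ω then p ω else 0

noncomputable def plog (q : ℝ) : ℝ := if q = 0 then 0 else -q * Real.logb 2 q

/-- Shannon entropy (in bits) of a random variable `X` on a finite space with pmf `p`. -/
noncomputable def entropy {Ω α : Type} [Fintype Ω] (p : Ω → ℝ) (X : Ω → α) : ℝ :=
  ∑ x ∈ Finset.univ.image X, plog (prob p (fun ω => X ω = x))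

/-- Conditional entropy `H(A|Z) = H(A,Z) - H(Z)` (in bits). -/
noncomputable def condEntropy {Ω α β : Type} [Fintype Ω] (p : Ω → ℝ) (A : Ω → α) (Z : Ω → β) : ℝ :=
  entropy p (fun ω => (A ω, Z ω)) - entropy p Z

/-- Mutual information `I(X;Y)` (in bits). -/
noncomputable def mutualInfo {Ω α β : Type} [Fintype Ω] (p : Ω → ℝ) (X : Ω → α) (Y : Ω → β) : ℝ :=
  entropy p X + entropy p Y - entropy p (fun ω => (X ω, Y ω))

/-- Conditional mutual information `I(X;Y|Z) = H(X|Z) - H(X|Y,Z)` (in bits). -/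
noncomputable def condMutualInfo {Ω α β γ : Type} [Fintype Ω] (p : Ω → ℝ)
    (X : Ω → α) (Y : Ω → β) (Z : Ω → γ) : ℝ :=
  condEntropy p X Z - condEntropy p X (fun ω => (Y ω, Z ω))

/-- Expected codeword length `E[ℓ(A)]`. -/
noncomputable def expLen {Ω : Type} [Fintype Ω] (p : Ω → ℝ) (A : Ω → List Bool) : ℝ :=
  ∑ ω, p ω * (A ω).length

/-- θ(x) = x + (1+x)·log₂(1+x) − x·log₂(x); note `Real.logb 2 0 = 0`, so θ(0) = 0. -/
noncomputable def theta (x : ℝ) : ℝ :=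
  x + (1 + x) * Real.logb 2 (1 + x) - x * Real.logb 2 x

/-- The inverse of θ on `[0,∞)`. -/
noncomputable def thetaInv : ℝ → ℝ := Function.invFunOn theta (Set.Ici 0)

/-- History `(X_0, …, X_{t-1})` of a discrete-time process. -/
def hist {Ω α : Type} (X : ℕ → Ω → α) (t : ℕ) (ω : Ω) : Fin t → α := fun i => X i ω

lemma plog_eq_negMulLog_div (q : ℝ) : plog q = Real.negMulLog q / Real.log 2 := by
  unfold plog Real.negMulLog
  split_ifs with h
  · simp [h]
  · rw [Real.logb]; ring

lemma plog_le_mul_logb_inv_add {f g : ℝ} (hf : 0 ≤ f) (hg : 0 < g) :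
    plog f ≤ f * Real.logb 2 g⁻¹ + (g - f) / Real.log 2 := by
  have key : Real.negMulLog f ≤ f * Real.log g⁻¹ + (g - f) := by
    rcases hf.eq_or_lt with rfl | hf
    · simpa using hg.le
    · have hlog := mul_le_mul_of_nonneg_left (Real.log_le_sub_one_of_pos (div_pos hg hf)) hf.le
      rw [Real.log_div hg.ne' hf.ne', mul_sub_one, mul_div_cancel₀ _ hf.ne'] at hlog
      rw [Real.negMulLog, Real.log_inv]
      linarith
  rw [plog_eq_negMulLog_div, Real.logb, mul_div_assoc', ← add_div]
  exact div_le_div_of_nonneg_right key (Real.log_pos one_lt_two).le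

theorem sum_plog_le_sum_mul_logb_inv {ι : Type*} (s : Finset ι) {q g : ι → ℝ}
    (hq : ∀ i ∈ s, 0 ≤ q i) (hq1 : ∑ i ∈ s, q i = 1) (hg : ∀ i ∈ s, 0 < g i)
    (hg1 : ∑ i ∈ s, g i ≤ 1) :
    ∑ i ∈ s, plog (q i) ≤ ∑ i ∈ s, q i * Real.logb 2 (g i)⁻¹ := by
  have hslack : ∑ i ∈ s, (g i - q i) / Real.log 2 ≤ 0 := by
    rw [← Finset.sum_div, Finset.sum_sub_distrib, hq1]
    exact div_nonpos_of_nonpos_of_nonneg (by linarith) (Real.log_pos one_lt_two).le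
  calc ∑ i ∈ s, plog (q i)
      ≤ ∑ i ∈ s, (q i * Real.logb 2 (g i)⁻¹ + (g i - q i) / Real.log 2) :=
        Finset.sum_le_sum fun i hi => plog_le_mul_logb_inv_add (hq i hi) (hg i hi)
    _ ≤ ∑ i ∈ s, q i * Real.logb 2 (g i)⁻¹ := by rw [Finset.sum_add_distrib]; linarith

theorem sum_pow_length_le {β : Type*} [Fintype β] (T : Finset (List β)) {r : ℝ} (hr0 : 0 ≤ r)
    (hr : Fintype.card β * r < 1) :
    ∑ l ∈ T, r ^ l.length ≤ (1 - Fintype.card β * r)⁻¹ := by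
  have hmaps : ∀ l ∈ T, l.length ∈ range (T.sup List.length + 1) := fun l hl =>
    mem_range.mpr (Nat.lt_succ_of_le (le_sup hl))
  rw [← sum_fiberwise_of_maps_to hmaps]
  calc ∑ k ∈ range (T.sup List.length + 1), ∑ l ∈ T with l.length = k, r ^ l.length
      ≤ ∑ k ∈ range (T.sup List.length + 1), (Fintype.card β * r) ^ k := by
        gcongr with k
        rw [sum_congr rfl fun l hl => by rw [(mem_filter.mp hl).2], sum_const, nsmul_eq_mul,
          mul_pow]
        gcongr
        exact_mod_cast card_filter_length_eq_le
    _ ≤ (Fintype.card β * r) ^ 0 / (1 - Fintype.card β * r) := by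
        rw [range_eq_Ico]; exact geom_sum_Ico_le_of_lt_one (by positivity) hr
    _ = (1 - Fintype.card β * r)⁻¹ := by rw [pow_zero, one_div]

section Probability

variable {Ω α : Type} [Fintype Ω] {p : Ω → ℝ}

lemma prob_nonneg (hp : ∀ ω, 0 ≤ p ω) (E : Ω → Prop) : 0 ≤ prob p E :=
  sum_nonneg fun ω _ => by split_ifs; exacts [hp ω, le_rfl]

lemma prob_le_one (hp : ∀ ω, 0 ≤ p ω) (hsum : ∑ ω, p ω = 1) (E : Ω → Prop) : prob p E ≤ 1 :=
  hsum ▸ sum_le_sum fun ω _ => by split_ifs; exacts [le_rfl, hp ω]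

lemma sum_image_prob_mul (p : Ω → ℝ) (A : Ω → α) (F : α → ℝ) :
    ∑ x ∈ univ.image A, prob p (fun ω => A ω = x) * F x = ∑ ω, p ω * F (A ω) := by
  rw [← sum_fiberwise_of_maps_to (g := A) fun ω _ => mem_image_of_mem A (mem_univ ω)]
  refine sum_congr rfl fun x _ => ?_
  rw [prob, sum_mul, sum_filter]
  refine sum_congr rfl fun ω _ => ?_
  split_ifs with h <;> simp [h]

lemma entropy_nonneg (hp : ∀ ω, 0 ≤ p ω) (hsum : ∑ ω, p ω = 1) (A : Ω → α) :
    0 ≤ entropy p A :=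
  sum_nonneg fun _ _ => by
    rw [plog_eq_negMulLog_div]
    exact div_nonneg (Real.negMulLog_nonneg (prob_nonneg hp _) (prob_le_one hp hsum _))
      (Real.log_pos one_lt_two).le

lemma expLen_nonneg (hp : ∀ ω, 0 ≤ p ω) (c : Ω → List Bool) : 0 ≤ expLen p c :=
  sum_nonneg fun ω _ => mul_nonneg (hp ω) (Nat.cast_nonneg _)

theorem entropy_le_sum_mul_logb_inv (hp : ∀ ω, 0 ≤ p ω) (hsum : ∑ ω, p ω = 1) (A : Ω → α)
    {g : α → ℝ} (hg : ∀ x, 0 < g x) (hg1 : ∑ x ∈ univ.image A, g x ≤ 1) :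
    entropy p A ≤ ∑ ω, p ω * Real.logb 2 (g (A ω))⁻¹ := by
  rw [← sum_image_prob_mul p A fun x => Real.logb 2 (g x)⁻¹]
  refine sum_plog_le_sum_mul_logb_inv _ (fun _ _ => prob_nonneg hp _) ?_ (fun x _ => hg x) hg1
  simpa [hsum] using sum_image_prob_mul p A 1

theorem entropy_le_logb_add_expLen_mul (hp : ∀ ω, 0 ≤ p ω) (hsum : ∑ ω, p ω = 1) (A : Ω → α)
    {C : α → List Bool} (hC : Function.Injective C) {s : ℝ} (hs0 : 0 < s) (hs1 : s < 1) :
    entropy p A ≤ Real.logb 2 (1 - s)⁻¹ + expLen p (fun ω => C (A ω)) * Real.logb 2 (2 / s) := by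
  set g : α → ℝ := fun x => (1 - s) * (s / 2) ^ (C x).length
  have hg : ∀ x, 0 < g x := fun x => mul_pos (sub_pos.mpr hs1) (by positivity)
  have hg1 : ∑ x ∈ univ.image A, g x ≤ 1 := by
    have hkraft := sum_pow_length_le ((univ.image A).image C) (r := s / 2) (by positivity)
      (by rw [Fintype.card_bool]; push_cast; linarith)
    rw [sum_image hC.injOn, Fintype.card_bool] at hkraft
    calc ∑ x ∈ univ.image A, g x = (1 - s) * ∑ x ∈ univ.image A, (s / 2) ^ (C x).length :=
          (mul_sum _ _ _).symm
      _ ≤ (1 - s) * (1 - s)⁻¹ :=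
          mul_le_mul_of_nonneg_left (hkraft.trans_eq (by push_cast; ring_nf)) (sub_pos.mpr hs1).le
      _ = 1 := mul_inv_cancel₀ (sub_pos.mpr hs1).ne'
  have hlog : ∀ x, Real.logb 2 (g x)⁻¹
      = Real.logb 2 (1 - s)⁻¹ + (C x).length * Real.logb 2 (2 / s) := by
    intro x
    rw [mul_inv, ← inv_pow, inv_div,
      Real.logb_mul (inv_ne_zero (sub_pos.mpr hs1).ne') (by positivity), Real.logb_pow]
  calc entropy p A ≤ ∑ ω, p ω * Real.logb 2 (g (A ω))⁻¹ :=
        entropy_le_sum_mul_logb_inv hp hsum A hg hg1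
    _ = Real.logb 2 (1 - s)⁻¹ + expLen p (fun ω => C (A ω)) * Real.logb 2 (2 / s) := by
        simp only [hlog, mul_add, sum_add_distrib, ← mul_assoc, ← sum_mul, hsum, one_mul, expLen]

end Probability

section Theta

lemma theta_eq_add_div_log (x : ℝ) :
    theta x = x + ((1 + x) * Real.log (1 + x) - x * Real.log x) / Real.log 2 := by
  simp only [theta, Real.logb]; ring

lemma continuous_theta : Continuous theta := by
  simp only [funext theta_eq_add_div_log]
  exact continuous_id.add (((Real.continuous_mul_log.comp
    (continuous_const.add continuous_id)).sub Real.continuous_mul_log).div_const _)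

@[simp] lemma theta_zero : theta 0 = 0 := by simp [theta]

lemma self_le_theta {x : ℝ} (hx : 0 ≤ x) : x ≤ theta x := by
  have h1 : 0 ≤ Real.logb 2 (1 + x) := Real.logb_nonneg one_lt_two (by linarith)
  have h2 : x * Real.logb 2 x ≤ x * Real.logb 2 (1 + x) := by
    rcases hx.eq_or_lt with rfl | hx
    · simp
    · exact mul_le_mul_of_nonneg_left
        (Real.logb_le_logb_of_le one_lt_two hx (by linarith)) hx.le
  rw [theta]
  nlinarith

lemma hasDerivAt_theta {x : ℝ} (hx : 0 < x) :
    HasDerivAt theta (1 + (Real.log (1 + x) - Real.log x) / Real.log 2) x := by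
  have h1 : HasDerivAt (fun y => (1 + y) * Real.log (1 + y)) (Real.log (1 + x) + 1) x := by
    simpa [Function.comp_def] using (Real.hasDerivAt_mul_log (by positivity : 1 + x ≠ 0)).comp x
      ((hasDerivAt_id x).const_add 1)
  have h2 := Real.hasDerivAt_mul_log hx.ne'
  simp only [funext theta_eq_add_div_log]
  exact ((hasDerivAt_id x).add ((h1.sub h2).div_const _)).congr_deriv (by ring)

lemma strictMonoOn_theta : StrictMonoOn theta (Set.Ici 0) := by
  refine strictMonoOn_of_deriv_pos (convex_Ici 0) continuous_theta.continuousOn fun x hx => ?_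
  rw [interior_Ici] at hx
  rw [(hasDerivAt_theta hx).deriv]
  have : Real.log x < Real.log (1 + x) := Real.log_lt_log hx (by linarith)
  have : 0 < (Real.log (1 + x) - Real.log x) / Real.log 2 :=
    div_pos (by linarith) (Real.log_pos one_lt_two)
  linarith

lemma theta_surjOn_Ici : Set.SurjOn theta (Set.Ici 0) (Set.Ici 0) := fun y hy =>
  have hIcc := intermediate_value_Icc (Set.mem_Ici.mp hy) continuous_theta.continuousOn
    ⟨by simpa using hy, self_le_theta hy⟩
  ⟨_, hIcc.choose_spec.1.1, hIcc.choose_spec.2⟩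

lemma thetaInv_le {y L : ℝ} (hy : 0 ≤ y) (hL : 0 ≤ L) (h : y ≤ theta L) : thetaInv y ≤ L := by
  have hpre := theta_surjOn_Ici (Set.mem_Ici.mpr hy)
  refine (strictMonoOn_theta.le_iff_le (Function.invFunOn_mem hpre) hL).mp ?_
  rwa [Function.invFunOn_eq hpre]

lemma theta_eq_logb_inv_add {L : ℝ} (hL : 0 < L) :
    theta L = Real.logb 2 (1 - L / (1 + L))⁻¹ + L * Real.logb 2 (2 / (L / (1 + L))) := by
  have h1L : 0 < 1 + L := by linarith
  rw [one_sub_div h1L.ne', add_sub_cancel_right, one_div, inv_inv, div_div_eq_mul_div,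
    Real.logb_div (by positivity) hL.ne', Real.logb_mul two_ne_zero h1L.ne',
    Real.logb_self_eq_one one_lt_two, theta]
  ring

end Theta

theorem entropy_le_theta_expLen {Ω α : Type} [Fintype Ω] {p : Ω → ℝ} (hp : ∀ ω, 0 ≤ p ω)
    (hsum : ∑ ω, p ω = 1) (A : Ω → α) {C : α → List Bool} (hC : Function.Injective C) :
    entropy p A ≤ theta (expLen p fun ω => C (A ω)) := by
  have hbound := fun s (hs : s ∈ Set.Ioo (0 : ℝ) 1) =>
    entropy_le_logb_add_expLen_mul hp hsum A hC hs.1 hs.2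
  rcases (expLen_nonneg hp fun ω => C (A ω)).eq_or_lt with hL | hL
  · -- for `L = 0` the bound `log₂ (1 - s)⁻¹` only tends to `θ 0 = 0` as `s → 0⁺`
    rw [← hL, theta_zero]
    have hlim : Filter.Tendsto (fun s => Real.logb 2 (1 - s)⁻¹) (nhdsWithin 0 (Set.Ioi 0))
        (nhds 0) := by
      refine tendsto_nhdsWithin_of_tendsto_nhds ?_
      have : ContinuousAt (fun s : ℝ => Real.logb 2 (1 - s)⁻¹) 0 := by fun_prop (disch := norm_num)
      simpa using this.tendsto
    refine ge_of_tendsto hlim ?_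
    filter_upwards [Ioo_mem_nhdsGT one_pos] with s hs
    simpa [← hL] using hbound s hs
  · rw [theta_eq_logb_inv_add hL]
    exact hbound _ ⟨by positivity, (div_lt_one (by linarith)).mpr (by linarith)⟩

theorem lossless_nonprefix_bound {Ω α : Type} [Fintype Ω]
    (p : Ω → ℝ) (hp : ∀ ω, 0 ≤ p ω) (hsum : ∑ ω, p ω = 1)
    (A : Ω → α) (C : α → List Bool) (hC : Function.Injective C) :
    expLen p (fun ω => C (A ω)) ≥ thetaInv (entropy p A) :=
  thetaInv_le (entropy_nonneg hp hsum A) (expLen_nonneg hp _) (entropy_le_theta_expLen hp hsum A hC)
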